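/- For every 3SAT formula φ on n boolean variables (n even, n ≥ 4) and every truth assignment A of the variables, the sequence V₁, V₂, …, V_n, L₁, L₂, …, L_n, V_{n+1}, …, V_{2n} — where L_i = X_i if A sets x_i true and L_i = X̄_i otherwise — is a shortest path of length 3n − 1 from V₁ to V_{2n} in G(φ). In particular G(φ) has at least 2ⁿ distinct diametral paths. -/

import Mathlib

open SimpleGraph

/-- Vertices of the graph `G(φ)` associated with a 3SAT formula `φ` with `m` clauses over `n`
boolean variables (`n` even):
* `lit i b` is the literal vertex `X_{i+1}` (if `b = true`) or `X̄_{i+1}` (if `b = false`);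
* `chain k` is the vertex `V_{k+1}` of the two pending chains `V₁ — ⋯ — V_n` and
  `V_{n+1} — ⋯ — V_{2n}`;
* `clause j` is the vertex of the clause `C_{j+1}`;
* `inner j t s` is the `(s+1)`-st internal vertex of the path of length `n/2 + 1` (with `n/2`
  internal vertices) joining the clause vertex `C_{j+1}` to the vertex of its `(t+1)`-st
  literal. -/
inductive Vert (n m : ℕ) : Type
  | lit : Fin n → Bool → Vert n m
  | chain : Fin (2 * n) → Vert n m
  | clause : Fin m → Vert n m
  | inner : Fin m → Fin 3 → Fin (n / 2) → Vert n m
  deriving DecidableEq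

/-- The base (asymmetric) adjacency relation of `G(φ)`, where the 3SAT formula `φ` assigns to
each clause index `j` and each slot `t ∈ {0,1,2}` a literal `φ j t = (i, b)` (variable index
`i`, polarity `b`):
* `X_i` and `X̄_i` are adjacent, and every vertex of `{X_i, X̄_i}` is adjacent to every vertex
  of `{X_{i+1}, X̄_{i+1}}`;
* `V₁ — ⋯ — V_n` and `V_{n+1} — ⋯ — V_{2n}` are paths, `V_n` is moreover adjacent to both
  `X₁, X̄₁` and `V_{n+1}` to both `X_n, X̄_n`;
* each clause vertex `C_j` is joined to the vertex of each of its literals by a path of length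
  `n/2 + 1` whose `n/2` internal vertices are the `inner j t s`. -/
def satRel (n m : ℕ) (φ : Fin m → Fin 3 → Fin n × Bool) : Vert n m → Vert n m → Prop
  | .lit i b, .lit i' b' => (i = i' ∧ b ≠ b') ∨ (i : ℕ) + 1 = (i' : ℕ)
  | .chain k, .chain k' => (k : ℕ) + 1 = (k' : ℕ) ∧ (k' : ℕ) ≠ n
  | .chain k, .lit i _ => ((k : ℕ) = n - 1 ∧ (i : ℕ) = 0) ∨ ((k : ℕ) = n ∧ (i : ℕ) = n - 1)
  | .clause j, .inner j' _ s => j = j' ∧ (s : ℕ) = 0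
  | .inner j t s, .inner j' t' s' => j = j' ∧ t = t' ∧ (s : ℕ) + 1 = (s' : ℕ)
  | .inner j t s, .lit i b => (s : ℕ) = n / 2 - 1 ∧ φ j t = (i, b)
  | _, _ => False

/-- The graph `G(φ)` associated with a 3SAT formula `φ`. -/
def Gphi (n m : ℕ) (φ : Fin m → Fin 3 → Fin n × Bool) : SimpleGraph (Vert n m) :=
  SimpleGraph.fromRel (satRel n m φ)

/-- The support of the path `V₁, …, V_n, L₁, …, L_n, V_{n+1}, …, V_{2n}` determined by a truth
assignment `A`, where `L_i = X_i` if `A` sets `x_i` true and `L_i = X̄_i` otherwise. -/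
def assignSupport (n m : ℕ) (A : Fin n → Bool) : List (Vert n m) :=
  ((List.finRange n).map fun i => Vert.chain (Fin.castLE (by omega) i)) ++
  ((List.finRange n).map fun i => Vert.lit i (A i)) ++
  ((List.finRange n).map fun (i : Fin n) => Vert.chain ⟨n + (i : ℕ), by have := i.isLt; omega⟩)

/-!
The potential `ρ` (position along `V₁ ⋯ V_n X₁ ⋯ X_n V_{n+1} ⋯ V_{2n}`, extended to the clause
gadgets) changes by at most one along every edge and goes from `0` at `V₁` to `3n - 1` at
`V_{2n}`, so `d(V₁, V_{2n}) ≥ 3n - 1`, with equality along every assignment path. Conversely every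
vertex lies within `n` of some literal vertex and any two literal vertices are within `n - 1` of
each other, so `diam G(φ) ≤ 3n - 1`.
-/

namespace SimpleGraph

variable {V : Type*} {G : SimpleGraph V} {u v w : V}

theorem Walk.apply_le_apply_add_length {f : V → ℤ} (hf : ∀ x y, G.Adj x y → f y ≤ f x + 1)
    (p : G.Walk u v) : f v ≤ f u + p.length := by
  induction p with
  | nil => simp
  | cons h p ih =>
    rw [Walk.length_cons]
    have := hf _ _ h
    omega

theorem Reachable.sub_le_dist {f : V → ℤ} (hf : ∀ x y, G.Adj x y → f y ≤ f x + 1)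
    (h : G.Reachable u v) : f v - f u ≤ G.dist u v := by
  obtain ⟨p, hp⟩ := h.exists_walk_length_eq_dist
  have := p.apply_le_apply_add_length hf
  omega

theorem edist_le_add_one_of_adj {d : ℕ∞} (h : G.Adj u v) (hv : G.edist v w ≤ d) :
    G.edist u w ≤ d + 1 :=
  calc G.edist u w ≤ G.edist u v + G.edist v w := G.edist_triangle
    _ ≤ 1 + d := add_le_add (edist_eq_one_iff_adj.2 h).le hv
    _ = d + 1 := add_comm _ _

theorem dist_eq_diam_of_ediam_le {k : ℕ} (hk : G.ediam ≤ k) (huv : k ≤ G.dist u v) :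
    G.dist u v = G.diam := by
  have hne : G.ediam ≠ ⊤ := ne_top_of_le_ne_top (ENat.natCast_ne_top k) hk
  have hdiam : G.diam ≤ k := by
    simpa [diam] using ENat.toNat_le_toNat hk (ENat.natCast_ne_top k)
  have := G.dist_le_diam hne (u := u) (v := v)
  omega

end SimpleGraph

namespace Gphi

variable {n m : ℕ} {φ : Fin m → Fin 3 → Fin n × Bool}

theorem adj_of_satRel {u v : Vert n m} (hne : u ≠ v) (h : satRel n m φ u v) :
    (Gphi n m φ).Adj u v :=
  (fromRel_adj _ _ _).2 ⟨hne, Or.inl h⟩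

theorem adj_chain_succ {k k' : Fin (2 * n)} (h : (k : ℕ) + 1 = k') (hk' : (k' : ℕ) ≠ n) :
    (Gphi n m φ).Adj (.chain k) (.chain k') :=
  adj_of_satRel (by rintro ⟨⟩; omega) ⟨h, hk'⟩

theorem adj_chain_lit_zero {k : Fin (2 * n)} {i : Fin n} {b : Bool} (hk : (k : ℕ) = n - 1)
    (hi : (i : ℕ) = 0) : (Gphi n m φ).Adj (.chain k) (.lit i b) :=
  adj_of_satRel (by simp) (Or.inl ⟨hk, hi⟩)

theorem adj_lit_last_chain {k : Fin (2 * n)} {i : Fin n} {b : Bool} (hi : (i : ℕ) = n - 1)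
    (hk : (k : ℕ) = n) : (Gphi n m φ).Adj (.lit i b) (.chain k) :=
  (adj_of_satRel (u := .chain k) (v := .lit i b) (by simp) (Or.inr ⟨hk, hi⟩)).symm

theorem adj_lit_succ {i i' : Fin n} {b b' : Bool} (h : (i : ℕ) + 1 = i') :
    (Gphi n m φ).Adj (.lit i b) (.lit i' b') :=
  adj_of_satRel (by rintro ⟨⟩; omega) (Or.inr h)

theorem adj_lit_of_ne {i : Fin n} {b b' : Bool} (h : b ≠ b') :
    (Gphi n m φ).Adj (.lit i b) (.lit i b') :=
  adj_of_satRel (by simpa using h) (Or.inl ⟨rfl, h⟩)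

theorem adj_clause_inner {j : Fin m} {t : Fin 3} {s : Fin (n / 2)} (hs : (s : ℕ) = 0) :
    (Gphi n m φ).Adj (.clause j) (.inner j t s) :=
  adj_of_satRel (by simp) ⟨rfl, hs⟩

theorem adj_inner_succ {j : Fin m} {t : Fin 3} {s s' : Fin (n / 2)} (h : (s : ℕ) + 1 = s') :
    (Gphi n m φ).Adj (.inner j t s) (.inner j t s') :=
  adj_of_satRel (by rintro ⟨⟩; omega) ⟨rfl, rfl, h⟩

theorem adj_inner_lit {j : Fin m} {t : Fin 3} {s : Fin (n / 2)} (hs : (s : ℕ) = n / 2 - 1) :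
    (Gphi n m φ).Adj (.inner j t s) (.lit (φ j t).1 (φ j t).2) :=
  adj_of_satRel (by simp) ⟨hs, rfl⟩

def potential (n m : ℕ) (φ : Fin m → Fin 3 → Fin n × Bool) : Vert n m → ℤ
  | .lit i _ => n + i
  | .chain k => if (k : ℕ) < n then k else k + n
  | .clause _ => n + n / 2
  | .inner j t s =>
      -- the clause value `n + n / 2`, clamped to within `n / 2 - s` (the distance to the
      -- literal end of the path) of the literal value `n + (φ j t).1`
      max (n + (φ j t).1 - (n / 2 - s)) (min (n + n / 2) (n + (φ j t).1 + (n / 2 - s)))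

theorem abs_potential_sub_le_one {u v : Vert n m} (h : satRel n m φ u v) :
    |potential n m φ u - potential n m φ v| ≤ 1 := by
  rw [abs_sub_le_iff]
  cases u <;> cases v <;> simp only [satRel] at h <;> simp only [potential]
  case lit.lit i b i' b' => rcases h with ⟨rfl, -⟩ | h <;> omega
  case chain.lit k i b => rcases h with h | h <;> split_ifs <;> omega
  case chain.chain k k' => split_ifs <;> omega
  case clause.inner j j' t s =>
    have := ((φ j' t).1).isLt
    omega
  case inner.lit j t s i b =>
    obtain ⟨hs, hφ⟩ := h
    have := s.isLt
    simp only [hφ]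
    omega
  case inner.inner j t s j' t' s' =>
    obtain ⟨rfl, rfl, hs⟩ := h
    omega

theorem potential_le_add_one_of_adj {u v : Vert n m} (h : (Gphi n m φ).Adj u v) :
    potential n m φ v ≤ potential n m φ u + 1 := by
  rcases ((fromRel_adj _ _ _).1 h).2 with h | h
  · exact sub_le_iff_le_add'.1 (abs_sub_le_iff.1 (abs_potential_sub_le_one h)).2
  · exact sub_le_iff_le_add'.1 (abs_sub_le_iff.1 (abs_potential_sub_le_one h)).1

theorem isChain_adj_assignSupport (A : Fin n → Bool) :
    (assignSupport n m A).IsChain (Gphi n m φ).Adj := by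
  simp only [assignSupport, ← List.ofFn_eq_map, List.isChain_append, List.getLast?_append]
  simp only [List.isChain_ofFn, List.getLast?_eq_getElem?, List.head?_eq_getElem?,
    List.getElem?_ofFn, List.length_ofFn]
  refine ⟨⟨fun i hi => ?_, fun i hi => ?_, ?_⟩, fun i hi => ?_, ?_⟩
  · exact adj_chain_succ rfl (by simp; omega)
  · exact adj_lit_succ rfl
  · split_ifs <;> simp [adj_chain_lit_zero]
  · exact adj_chain_succ (by simp; omega) (by simp)
  · split_ifs <;> simp [adj_lit_last_chain]

theorem edist_lit_lit_of_lt {i i' : Fin n} (h : (i : ℕ) < i') (b b' : Bool) :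
    (Gphi n m φ).edist (.lit i b) (.lit i' b') ≤ (i' - i : ℕ) := by
  obtain ⟨d, hd⟩ := Nat.exists_eq_add_of_lt h
  rw [show (i' - i : ℕ) = d + 1 by omega]
  induction d generalizing i with
  | zero => exact (edist_eq_one_iff_adj.2 (adj_lit_succ (by omega))).le
  | succ d ih =>
    push_cast
    exact edist_le_add_one_of_adj (adj_lit_succ (i' := ⟨i + 1, by omega⟩) rfl)
      (ih (by simp; omega) (by simp; omega))

theorem edist_lit_lit_le (hn : 2 ≤ n) (i i' : Fin n) (b b' : Bool) :
    (Gphi n m φ).edist (.lit i b) (.lit i' b') ≤ (n - 1 : ℕ) := by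
  rcases lt_trichotomy (i : ℕ) i' with h | h | h
  · exact (edist_lit_lit_of_lt h b b').trans (by exact_mod_cast (by omega))
  · obtain rfl := Fin.ext h
    calc (Gphi n m φ).edist (.lit i b) (.lit i b') ≤ 1 :=
          edist_le_one_iff_adj_or_eq.2 <| (em (b = b')).symm.imp adj_lit_of_ne (by rintro rfl; rfl)
      _ ≤ (n - 1 : ℕ) := by exact_mod_cast (by omega)
  · rw [SimpleGraph.edist_comm]
    exact (edist_lit_lit_of_lt h b' b).trans (by exact_mod_cast (by omega))

theorem edist_chain_lit_zero {k : Fin (2 * n)} (hk : (k : ℕ) < n) (b : Bool) :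
    (Gphi n m φ).edist (.chain k) (.lit ⟨0, by omega⟩ b) ≤ (n - k : ℕ) := by
  obtain ⟨d, hd⟩ := Nat.exists_eq_add_of_lt hk
  rw [show (n - k : ℕ) = d + 1 by omega]
  induction d generalizing k with
  | zero => exact (edist_eq_one_iff_adj.2 (adj_chain_lit_zero (by omega) rfl)).le
  | succ d ih =>
    push_cast
    exact edist_le_add_one_of_adj (adj_chain_succ (k' := ⟨k + 1, by omega⟩) rfl (by simp; omega))
      (ih (by simp; omega) (by simp; omega))

theorem edist_chain_lit_last {k : Fin (2 * n)} (hk : n ≤ (k : ℕ)) (b : Bool) :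
    (Gphi n m φ).edist (.chain k) (.lit ⟨n - 1, by omega⟩ b) ≤ (k + 1 - n : ℕ) := by
  obtain ⟨d, hd⟩ := Nat.exists_eq_add_of_le hk
  rw [show (k + 1 - n : ℕ) = d + 1 by omega]
  induction d generalizing k with
  | zero => exact (edist_eq_one_iff_adj.2 (adj_lit_last_chain rfl (by omega)).symm).le
  | succ d ih =>
    push_cast
    exact edist_le_add_one_of_adj
      (adj_chain_succ (k := ⟨k - 1, by omega⟩) (by simp; omega) (by omega)).symm
      (ih (by simp; omega) (by simp; omega))

theorem edist_inner_lit (j : Fin m) (t : Fin 3) (s : Fin (n / 2)) :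
    (Gphi n m φ).edist (.inner j t s) (.lit (φ j t).1 (φ j t).2) ≤ (n / 2 - s : ℕ) := by
  obtain ⟨d, hd⟩ := Nat.exists_eq_add_of_lt s.isLt
  rw [show (n / 2 - s : ℕ) = d + 1 by omega]
  induction d generalizing s with
  | zero => exact (edist_eq_one_iff_adj.2 (adj_inner_lit (by omega))).le
  | succ d ih =>
    push_cast
    exact edist_le_add_one_of_adj (adj_inner_succ (s' := ⟨s + 1, by omega⟩) rfl)
      (ih _ (by simp; omega))

theorem exists_edist_lit_le (hn : 2 ≤ n) (v : Vert n m) :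
    ∃ i b, (Gphi n m φ).edist v (.lit i b) ≤ n := by
  cases v with
  | lit i b => exact ⟨i, b, by simp⟩
  | chain k =>
    by_cases hk : (k : ℕ) < n
    · exact ⟨_, true, (edist_chain_lit_zero hk true).trans (by exact_mod_cast (by omega))⟩
    · exact ⟨_, true, (edist_chain_lit_last (by omega) true).trans
        (by exact_mod_cast (by omega))⟩
  | clause j =>
    have := edist_le_add_one_of_adj (adj_clause_inner (t := 0) (s := ⟨0, by omega⟩) rfl)
      (edist_inner_lit (φ := φ) j 0 _)
    exact ⟨_, _, this.trans (by exact_mod_cast (by omega))⟩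
  | inner j t s => exact ⟨_, _, (edist_inner_lit j t s).trans (by exact_mod_cast (by omega))⟩

theorem ediam_le (hn : 2 ≤ n) : (Gphi n m φ).ediam ≤ (3 * n - 1 : ℕ) := by
  refine ediam_le_of_edist_le fun u v => ?_
  obtain ⟨i, b, hu⟩ := exists_edist_lit_le (φ := φ) hn u
  obtain ⟨i', b', hv⟩ := exists_edist_lit_le (φ := φ) hn v
  calc (Gphi n m φ).edist u v
      ≤ (Gphi n m φ).edist u (.lit i b) + (Gphi n m φ).edist (.lit i b) (.lit i' b')
        + (Gphi n m φ).edist (.lit i' b') v :=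
        SimpleGraph.edist_triangle.trans (add_le_add_left SimpleGraph.edist_triangle _)
    _ ≤ n + (n - 1 : ℕ) + n := by
        gcongr
        · exact edist_lit_lit_le hn i i' b b'
        · rwa [SimpleGraph.edist_comm]
    _ = (3 * n - 1 : ℕ) := by norm_cast; omega

theorem length_assignSupport (A : Fin n → Bool) : (assignSupport n m A).length = 3 * n := by
  simp only [assignSupport, List.length_append, List.length_map, List.length_finRange]
  ring

theorem assignSupport_injective : Function.Injective (assignSupport n m) := by
  intro A A' h
  have hlit := List.append_cancel_left (List.append_cancel_right h)
  funext i
  simpa using List.map_inj_left.1 hlit i (List.mem_finRange i)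

theorem length_eq_of_support_eq_assignSupport {u v : Vert n m} {p : (Gphi n m φ).Walk u v}
    {A : Fin n → Bool} (hp : p.support = assignSupport n m A) : p.length = 3 * n - 1 := by
  have := congrArg List.length hp
  rw [Walk.length_support, length_assignSupport] at this
  omega

theorem exists_walk_support_eq_assignSupport (hn : 0 < n) (A : Fin n → Bool) :
    ∃ p : (Gphi n m φ).Walk (.chain ⟨0, by omega⟩) (.chain ⟨2 * n - 1, by omega⟩),
      p.support = assignSupport n m A := by
  have hne : assignSupport n m A ≠ [] :=
    List.ne_nil_of_length_pos (by rw [length_assignSupport]; omega)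
  have hhead : (assignSupport n m A).head hne = .chain ⟨0, by omega⟩ := by
    simp [List.head_eq_getElem, assignSupport, List.getElem_append_left, hn]
  have hlast : (assignSupport n m A).getLast hne = .chain ⟨2 * n - 1, by omega⟩ := by
    simp only [assignSupport, List.getLast_eq_getElem, List.append_assoc, List.length_append,
      List.length_map, List.length_finRange]
    rw [List.getElem_append_right (by simp; omega), List.getElem_append_right (by simp; omega)]
    simp only [List.length_map, List.length_finRange, List.getElem_map, List.getElem_finRange,
      Fin.cast_mk, Vert.chain.injEq, Fin.mk.injEq]
    omega
  exact ⟨(Walk.ofSupport _ hne (isChain_adj_assignSupport A)).copy hhead hlast, by simp⟩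

theorem dist_chain_zero_chain_last (hn : 0 < n) :
    (Gphi n m φ).dist (.chain ⟨0, by omega⟩) (.chain ⟨2 * n - 1, by omega⟩) = 3 * n - 1 := by
  obtain ⟨p, hp⟩ := exists_walk_support_eq_assignSupport (φ := φ) hn fun _ => true
  have hlen := length_eq_of_support_eq_assignSupport hp
  have hge := Reachable.sub_le_dist (fun _ _ => potential_le_add_one_of_adj) ⟨p⟩
  simp only [potential] at hge
  have := dist_le p
  split_ifs at hge <;> omega

end Gphi

/-- For every 3SAT formula `φ` on `n` boolean variables (`n` even, `n ≥ 4`) and every truth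
assignment `A`, the sequence `V₁, …, V_n, L₁, …, L_n, V_{n+1}, …, V_{2n}` — where `L_i = X_i`
if `A` sets `x_i` true and `L_i = X̄_i` otherwise — is a shortest path of length `3n − 1` from
`V₁` to `V_{2n}` in `G(φ)`; in particular (the assignment of walks being injective) `G(φ)` has
at least `2ⁿ` distinct diametral paths. -/
theorem Gphi_assignment_paths (n m : ℕ) (h4 : 4 ≤ n)
    (φ : Fin m → Fin 3 → Fin n × Bool) :
    (Gphi n m φ).dist (Vert.chain ⟨0, by omega⟩) (Vert.chain ⟨2 * n - 1, by omega⟩)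
        = (Gphi n m φ).diam ∧
    ∃ f : (Fin n → Bool) →
        (Gphi n m φ).Walk (Vert.chain ⟨0, by omega⟩) (Vert.chain ⟨2 * n - 1, by omega⟩),
      Function.Injective f ∧
      ∀ A : Fin n → Bool,
        (f A).IsPath ∧
        (f A).support = assignSupport n m A ∧
        (f A).length = 3 * n - 1 ∧
        (f A).length
          = (Gphi n m φ).dist (Vert.chain ⟨0, by omega⟩) (Vert.chain ⟨2 * n - 1, by omega⟩) := by
  have hdist := Gphi.dist_chain_zero_chain_last (φ := φ) (by omega : 0 < n)
  choose f hf using Gphi.exists_walk_support_eq_assignSupport (φ := φ) (by omega : 0 < n)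
  have hlen (A : Fin n → Bool) := Gphi.length_eq_of_support_eq_assignSupport (hf A)
  refine ⟨dist_eq_diam_of_ediam_le (Gphi.ediam_le (by omega)) hdist.ge, f,
    fun A A' h => Gphi.assignSupport_injective (by rw [← hf, ← hf, h]),
    fun A => ⟨(f A).isPath_of_length_eq_dist ?_, hf A, hlen A, ?_⟩⟩ <;> rw [hlen, hdist]
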